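/- Behavior of Taylor transmission conditions without overlap at the pressure-wave cutoff (Theorem 3.3, k = ω/Cp): at k = ω/Cp one has λ₂ = 0 and λ₁ = i·ω√(Cp² − Cs²)/(Cp·Cs), the matrix entries satisfy b₁₂ = 0 and b₂₂ = 1, the two roots of the quadratic Q₀(z) = z² − (X₀² + 2Y₀)z + Y₀² are exactly 1 and b₁₁², and |b₁₁| < 1; hence max(|r₊|, |r₋|) = 1 and the non-overlapping method stagnates exactly at this frequency. -/

import Mathlib

noncomputable section

open Complex

/-- `λ₁ = √(k² − ω²/Cs²)`, principal branch of the complex square root. -/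
def lam1 (ω Cs k : ℝ) : ℂ := ((k ^ 2 - ω ^ 2 / Cs ^ 2 : ℝ) : ℂ) ^ ((1 : ℂ) / 2)

/-- `λ₂ = √(k² − ω²/Cp²)`, principal branch of the complex square root. -/
def lam2 (ω Cp k : ℝ) : ℂ := ((k ^ 2 - ω ^ 2 / Cp ^ 2 : ℝ) : ℂ) ^ ((1 : ℂ) / 2)

/-- `Z₁ = Cs³(k² + λ₁²)² + ω²Cp·k²`. -/
def Z1 (ω Cs Cp k : ℝ) : ℂ :=
  (Cs : ℂ) ^ 3 * ((k : ℂ) ^ 2 + (lam1 ω Cs k) ^ 2) ^ 2 + (ω : ℂ) ^ 2 * (Cp : ℂ) * (k : ℂ) ^ 2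

/-- `Z₂ = (4Cs³k² + Cpω²)λ₁λ₂`. -/
def Z2 (ω Cs Cp k : ℝ) : ℂ :=
  (4 * (Cs : ℂ) ^ 3 * (k : ℂ) ^ 2 + (Cp : ℂ) * (ω : ℂ) ^ 2) * lam1 ω Cs k * lam2 ω Cp k

/-- `K = 2k(Cpω² + 2Cs³(k² + λ₁²))`. -/
def Kq (ω Cs Cp k : ℝ) : ℂ :=
  2 * (k : ℂ) * ((Cp : ℂ) * (ω : ℂ) ^ 2 + 2 * (Cs : ℂ) ^ 3 * ((k : ℂ) ^ 2 + (lam1 ω Cs k) ^ 2))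

/-- `D = −Z₁ + Z₂ + iω³(λ₁ + λ₂Cp/Cs)`. -/
def Dq (ω Cs Cp k : ℝ) : ℂ :=
  -Z1 ω Cs Cp k + Z2 ω Cs Cp k +
    Complex.I * (ω : ℂ) ^ 3 * (lam1 ω Cs k + lam2 ω Cp k * (Cp : ℂ) / (Cs : ℂ))

/-- `b₁₁ = (−Z₁ − Z₂ − iω³(λ₁ − λ₂Cp/Cs))/D`. -/
def b11 (ω Cs Cp k : ℝ) : ℂ :=
  (-Z1 ω Cs Cp k - Z2 ω Cs Cp k -
    Complex.I * (ω : ℂ) ^ 3 * (lam1 ω Cs k - lam2 ω Cp k * (Cp : ℂ) / (Cs : ℂ))) / Dq ω Cs Cp k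

/-- `b₁₂ = iλ₂K/D`. -/
def b12 (ω Cs Cp k : ℝ) : ℂ :=
  Complex.I * lam2 ω Cp k * Kq ω Cs Cp k / Dq ω Cs Cp k

/-- `b₂₁ = −iλ₁K/D`. -/
def b21 (ω Cs Cp k : ℝ) : ℂ :=
  -Complex.I * lam1 ω Cs k * Kq ω Cs Cp k / Dq ω Cs Cp k

/-- `b₂₂ = (−Z₁ − Z₂ + iω³(λ₁ − λ₂Cp/Cs))/D`. -/
def b22 (ω Cs Cp k : ℝ) : ℂ :=
  (-Z1 ω Cs Cp k - Z2 ω Cs Cp k +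
    Complex.I * (ω : ℂ) ^ 3 * (lam1 ω Cs k - lam2 ω Cp k * (Cp : ℂ) / (Cs : ℂ))) / Dq ω Cs Cp k

/-- `X_δ = e^{−λ₁δ}b₁₁ − e^{−λ₂δ}b₂₂`. -/
def Xd (ω Cs Cp k δ : ℝ) : ℂ :=
  Complex.exp (-(lam1 ω Cs k) * (δ : ℂ)) * b11 ω Cs Cp k -
    Complex.exp (-(lam2 ω Cp k) * (δ : ℂ)) * b22 ω Cs Cp k

/-- `Y_δ = e^{−(λ₁+λ₂)δ}(b₁₁b₂₂ − b₁₂b₂₁)`. -/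
def Yd (ω Cs Cp k δ : ℝ) : ℂ :=
  Complex.exp (-(lam1 ω Cs k + lam2 ω Cp k) * (δ : ℂ)) *
    (b11 ω Cs Cp k * b22 ω Cs Cp k - b12 ω Cs Cp k * b21 ω Cs Cp k)

/-- The quadratic `Q_δ(z) = z² − (X_δ² + 2Y_δ)z + Y_δ²` whose roots are the eigenvalues `r±`
of the double-iteration operator of the Schwarz method with zeroth-order Taylor
transmission conditions. -/
def Qd (ω Cs Cp k δ : ℝ) (z : ℂ) : ℂ :=
  z ^ 2 - ((Xd ω Cs Cp k δ) ^ 2 + 2 * Yd ω Cs Cp k δ) * z + (Yd ω Cs Cp k δ) ^ 2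

/-! At `k = ω/Cp` one has `λ₂ = 0`, which kills `Z₂` and `b₁₂` and makes the numerator of
`b₂₂` equal to `D`, so `b₂₂ = 1`; then `Y₀ = b₁₁`, `X₀ = b₁₁ - 1` and `Q₀(z) = (z - 1)(z - b₁₁²)`.
Since `λ₁ = i a` is purely imaginary, `b₁₁ = (p - q)/(p + q)` with `p = Z₁ > 0` and `q = ω³a > 0`
real, whence `|b₁₁| < 1`. -/

theorem Complex.ofReal_cpow_half_of_nonpos {x : ℝ} (hx : x ≤ 0) :
    (x : ℂ) ^ ((1 : ℂ) / 2) = I * (√(-x) : ℝ) := by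
  have hsqrt : ((-x : ℝ) : ℂ) ^ ((1 : ℂ) / 2) = (√(-x) : ℝ) := by
    rw [Real.sqrt_eq_rpow, ofReal_cpow (neg_nonneg.mpr hx)]
    push_cast
    rfl
  rw [ofReal_cpow_of_nonpos hx, ← ofReal_neg, hsqrt,
    show (Real.pi : ℂ) * I * (1 / 2) = Real.pi / 2 * I by ring, exp_pi_div_two_mul_I, mul_comm]

theorem abs_sub_div_add_lt_one {p q : ℝ} (hp : 0 < p) (hq : 0 < q) :
    |(p - q) / (p + q)| < 1 := by
  rw [abs_div, abs_of_pos (add_pos hp hq), div_lt_one (add_pos hp hq), abs_sub_lt_iff]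
  constructor <;> linarith

section PressureCutoff

variable {ω Cs Cp k : ℝ}

theorem lam2_at_pressure_cutoff : lam2 ω Cp (ω / Cp) = 0 := by
  rw [lam2, div_pow, sub_self, ofReal_zero, zero_cpow (by norm_num)]

theorem lam1_at_pressure_cutoff (hω : 0 ≤ ω) (hCs : 0 < Cs) (hCsCp : Cs ≤ Cp) :
    lam1 ω Cs (ω / Cp) = I * ((ω * √(Cp ^ 2 - Cs ^ 2) / (Cp * Cs) : ℝ) : ℂ) := by
  have hCp : 0 < Cp := hCs.trans_le hCsCp
  set a := ω * √(Cp ^ 2 - Cs ^ 2) / (Cp * Cs)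
  have ha : 0 ≤ a := by positivity
  have hrad : (ω / Cp) ^ 2 - ω ^ 2 / Cs ^ 2 = -a ^ 2 := by
    simp only [a, div_pow, mul_pow, Real.sq_sqrt (sub_nonneg.mpr (pow_le_pow_left₀ hCs.le hCsCp 2))]
    field_simp
    ring
  rw [lam1, hrad, ofReal_cpow_half_of_nonpos (neg_nonpos.mpr (sq_nonneg a)), neg_neg,
    Real.sqrt_sq ha]

theorem b12_eq_zero_of_lam2_eq_zero (h2 : lam2 ω Cp k = 0) : b12 ω Cs Cp k = 0 := by
  simp [b12, h2]

theorem b22_eq_one_of_lam2_eq_zero (h2 : lam2 ω Cp k = 0) (hD : Dq ω Cs Cp k ≠ 0) :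
    b22 ω Cs Cp k = 1 := by
  rw [b22, div_eq_one_iff_eq hD, Dq, Z2, h2]
  ring

theorem Qd_zero_eq_mul_of_b12_b22 (hb12 : b12 ω Cs Cp k = 0) (hb22 : b22 ω Cs Cp k = 1)
    (z : ℂ) : Qd ω Cs Cp k 0 z = (z - 1) * (z - b11 ω Cs Cp k ^ 2) := by
  simp only [Qd, Xd, Yd, hb12, hb22, ofReal_zero, mul_zero, exp_zero]
  ring

theorem Z1_of_lam1_eq_I_mul {a : ℝ} (h1 : lam1 ω Cs k = I * a) :
    Z1 ω Cs Cp k = ((Cs ^ 3 * (k ^ 2 - a ^ 2) ^ 2 + ω ^ 2 * Cp * k ^ 2 : ℝ) : ℂ) := by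
  rw [Z1, h1, mul_pow, I_sq]
  push_cast
  ring

theorem Dq_of_lam2_eq_zero_of_lam1_eq_I_mul {a p : ℝ} (h2 : lam2 ω Cp k = 0)
    (h1 : lam1 ω Cs k = I * a) (hZ1 : Z1 ω Cs Cp k = p) :
    Dq ω Cs Cp k = -((p + ω ^ 3 * a : ℝ) : ℂ) := by
  rw [Dq, hZ1, Z2, h2, h1]
  push_cast
  linear_combination (ω : ℂ) ^ 3 * a * I_sq

theorem b11_of_lam2_eq_zero_of_lam1_eq_I_mul {a p : ℝ} (h2 : lam2 ω Cp k = 0)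
    (h1 : lam1 ω Cs k = I * a) (hZ1 : Z1 ω Cs Cp k = p) :
    b11 ω Cs Cp k = ((p - ω ^ 3 * a) / (p + ω ^ 3 * a) : ℝ) := by
  rw [b11, Dq_of_lam2_eq_zero_of_lam1_eq_I_mul h2 h1 hZ1, hZ1, Z2, h2, h1, ofReal_div,
    ← neg_div_neg_eq, neg_neg]
  congr 1
  push_cast
  linear_combination (ω : ℂ) ^ 3 * a * I_sq

end PressureCutoff

theorem taylor_nonoverlapping_pressure_cutoff_general
    (ω Cs Cp k : ℝ)
    (hω : 0 < ω) (hCs : 0 < Cs) (hCsCp : Cs < Cp)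
    (hk : k = ω / Cp) :
    lam2 ω Cp k = 0 ∧
    lam1 ω Cs k = Complex.I * ((ω * Real.sqrt (Cp ^ 2 - Cs ^ 2) / (Cp * Cs) : ℝ) : ℂ) ∧
    b12 ω Cs Cp k = 0 ∧
    b22 ω Cs Cp k = 1 ∧
    (∀ z : ℂ, Qd ω Cs Cp k 0 z = 0 ↔ z = 1 ∨ z = (b11 ω Cs Cp k) ^ 2) ∧
    ‖b11 ω Cs Cp k‖ < 1 := by
  subst hk
  have hCp : 0 < Cp := hCs.trans hCsCp
  set a := ω * √(Cp ^ 2 - Cs ^ 2) / (Cp * Cs)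
  have ha : 0 < a := by
    have := Real.sqrt_pos.mpr (sub_pos.mpr (pow_lt_pow_left₀ hCsCp hCs.le two_ne_zero))
    positivity
  have h2 := lam2_at_pressure_cutoff (ω := ω) (Cp := Cp)
  have h1 := lam1_at_pressure_cutoff hω.le hCs hCsCp.le
  have hZ1 := Z1_of_lam1_eq_I_mul (Cp := Cp) h1
  have hb12 := b12_eq_zero_of_lam2_eq_zero (Cs := Cs) h2
  have hp : 0 < Cs ^ 3 * ((ω / Cp) ^ 2 - a ^ 2) ^ 2 + ω ^ 2 * Cp * (ω / Cp) ^ 2 := by positivity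
  have hq : 0 < ω ^ 3 * a := by positivity
  have hD : Dq ω Cs Cp (ω / Cp) ≠ 0 := by
    rw [Dq_of_lam2_eq_zero_of_lam1_eq_I_mul h2 h1 hZ1, neg_ne_zero, ofReal_ne_zero]
    exact (add_pos hp hq).ne'
  have hb22 := b22_eq_one_of_lam2_eq_zero h2 hD
  refine ⟨h2, h1, hb12, hb22, fun z => ?_, ?_⟩
  · rw [Qd_zero_eq_mul_of_b12_b22 hb12 hb22, mul_eq_zero, sub_eq_zero, sub_eq_zero]
  · rw [b11_of_lam2_eq_zero_of_lam1_eq_I_mul h2 h1 hZ1, norm_real, Real.norm_eq_abs]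
    exact abs_sub_div_add_lt_one hp hq

/-- **Theorem 3.3, k = ω/Cp**: at the pressure-wave cutoff, `λ₂ = 0`,
`λ₁ = i·ω√(Cp² − Cs²)/(Cp·Cs)`, the matrix entries satisfy `b₁₂ = 0` and `b₂₂ = 1`, the two
roots of `Q₀(z) = z² − (X₀² + 2Y₀)z + Y₀²` are exactly `1` and `b₁₁²`, and `|b₁₁| < 1`;
hence `max(|r₊|, |r₋|) = 1` and the non-overlapping method stagnates at this frequency. -/
theorem taylor_nonoverlapping_pressure_cutoff
    (ω Cs Cp k : ℝ)
    (hω : 0 < ω) (hCs : 0 < Cs) (hCsCp : Cs < Cp) (hCp2 : 2 * Cs ^ 2 < Cp ^ 2)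
    (hk : k = ω / Cp)
    (hD : Dq ω Cs Cp k ≠ 0) :
    lam2 ω Cp k = 0 ∧
    lam1 ω Cs k = Complex.I * ((ω * Real.sqrt (Cp ^ 2 - Cs ^ 2) / (Cp * Cs) : ℝ) : ℂ) ∧
    b12 ω Cs Cp k = 0 ∧
    b22 ω Cs Cp k = 1 ∧
    (∀ z : ℂ, Qd ω Cs Cp k 0 z = 0 ↔ z = 1 ∨ z = (b11 ω Cs Cp k) ^ 2) ∧
    ‖b11 ω Cs Cp k‖ < 1 :=
  taylor_nonoverlapping_pressure_cutoff_general ω Cs Cp k hω hCs hCsCp hk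

end
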